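/- arXiv:2111.00158 — 3 statements merged into one kernel-verified Lean document; each statement's English description precedes it below -/
import Mathlib

section
/- Let p : X → S and q : Y → S be Grothendieck opfibrations classified by functors F, G : S → Cat, and let α : F ⟹ G be a natural transformation such that each component α_s : F(s) → G(s) admits a left adjoint β_s : G(s) → F(s). If moreover every naturality square of α is left adjointable (its Beck–Chevalley mate is an isomorphism), then the β_s assemble into a pseudonatural transformation G ⟹ F, i.e. for every morphism f : s → s' in S there is a natural isomorphism F(f) ∘ β_s ≅ β_{s'} ∘ G(f) satisfying the coherence conditions for composition of morphisms in S. -/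
/-!
Mates are functorial: the mate of a vertical pasting of squares is the horizontal pasting of
the mates, and the mate of an identity square is an identity. As `F` and `G` are strict functors
into `Cat`, the naturality square of `α` at `f ≫ g` is the pasting of those at `f` and `g`, and at
`𝟙 s` it is the identity square, up to `map_comp` and `map_id`. Hence the mates, which are
invertible by hypothesis, satisfy the coherences of a pseudonatural transformation.
-/

open CategoryTheory

variable {S : Type*} [Category S]

/-- The Beck–Chevalley mate `G f ⋙ β s' ⟶ β s ⋙ F f` of the naturality square of
`α : F ⟶ G` with respect to the pointwise adjunctions `β s ⊣ α.app s`. -/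
noncomputable def bcMate {F G : S ⥤ Cat} (α : F ⟶ G)
    (β : ∀ s : S, (G.obj s : Type _) ⥤ (F.obj s : Type _))
    (adj : ∀ s : S, β s ⊣ ((α.app s).toFunctor : (F.obj s : Type _) ⥤ (G.obj s : Type _)))
    {s s' : S} (f : s ⟶ s') :
    ((G.map f).toFunctor : (G.obj s : Type _) ⥤ (G.obj s' : Type _)) ⋙ β s' ⟶
      β s ⋙ ((F.map f).toFunctor : (F.obj s : Type _) ⥤ (F.obj s' : Type _)) :=
  (mateEquiv (adj s) (adj s')).symm
    (eqToHom (by exact congrArg Cat.Hom.toFunctor (α.naturality f).symm))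

namespace CategoryTheory

open CategoryTheory.Functor TwoSquare

variable {A B C D E F : Type*} [Category A] [Category B] [Category C] [Category D]
  [Category E] [Category F]

theorem TwoSquare.eqToHom_vComp_eqToHom {T : A ⥤ B} {L : A ⥤ C} {R : B ⥤ D} {M : C ⥤ D}
    {L' : C ⥤ E} {R' : D ⥤ F} {M' : E ⥤ F} (h : T ⋙ R = L ⋙ M) (h' : M ⋙ R' = L' ⋙ M') :
    (eqToHom h : TwoSquare T L R M) ≫ᵥ (eqToHom h' : TwoSquare M L' R' M') =
      eqToHom (by rw [← Functor.assoc, h, Functor.assoc, h', Functor.assoc]) := by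
  ext x
  simp [vComp, eqToHom_map]

theorem mateEquiv_symm_vId {L : A ⥤ B} {R : B ⥤ A} (adj : L ⊣ R) :
    (mateEquiv adj adj).symm (vId R) = hId L := by
  ext x
  simp [mateEquiv]

theorem mateEquiv_symm_vcomp {G₁ : A ⥤ C} {G₂ : C ⥤ E} {H₁ : B ⥤ D} {H₂ : D ⥤ F}
    {L₁ : A ⥤ B} {R₁ : B ⥤ A} {L₂ : C ⥤ D} {R₂ : D ⥤ C} {L₃ : E ⥤ F} {R₃ : F ⥤ E}
    (adj₁ : L₁ ⊣ R₁) (adj₂ : L₂ ⊣ R₂) (adj₃ : L₃ ⊣ R₃)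
    (w₁ : TwoSquare R₁ H₁ G₁ R₂) (w₂ : TwoSquare R₂ H₂ G₂ R₃) :
    (mateEquiv adj₁ adj₃).symm (w₁ ≫ᵥ w₂) =
      (mateEquiv adj₁ adj₂).symm w₁ ≫ₕ (mateEquiv adj₂ adj₃).symm w₂ :=
  (mateEquiv adj₁ adj₃).symm_apply_eq.mpr <| by
    rw [mateEquiv_vcomp adj₁ adj₂ adj₃, Equiv.apply_symm_apply, Equiv.apply_symm_apply]

/- The outer functors are only propositionally equal to the composite (or identity) ones, as
`G.map (f ≫ g)` is to `G.map f ⋙ G.map g` for a functor into `Cat`. -/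
theorem mateEquiv_symm_eqToHom_of_eq_id {L : A ⥤ B} {R : B ⥤ A} (adj : L ⊣ R)
    {G : A ⥤ A} {H : B ⥤ B} (hG : G = 𝟭 A) (hH : H = 𝟭 B) (h : R ⋙ G = H ⋙ R) :
    (mateEquiv adj adj).symm (eqToHom h) =
      eqToHom (by rw [hG, hH, Functor.id_comp, Functor.comp_id]) := by
  subst hG hH
  have h_vId : (eqToHom h : TwoSquare R (𝟭 B) (𝟭 A) R) = vId R := by ext; simp
  rw [h_vId, mateEquiv_symm_vId]
  ext; simp

theorem mateEquiv_symm_eqToHom_of_eq_comp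
    {G₁ : A ⥤ C} {G₂ : C ⥤ E} {H₁ : B ⥤ D} {H₂ : D ⥤ F} {G : A ⥤ E} {H : B ⥤ F}
    {L₁ : A ⥤ B} {R₁ : B ⥤ A} {L₂ : C ⥤ D} {R₂ : D ⥤ C} {L₃ : E ⥤ F} {R₃ : F ⥤ E}
    (adj₁ : L₁ ⊣ R₁) (adj₂ : L₂ ⊣ R₂) (adj₃ : L₃ ⊣ R₃)
    (hG : G = G₁ ⋙ G₂) (hH : H = H₁ ⋙ H₂) (h₁ : R₁ ⋙ G₁ = H₁ ⋙ R₂)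
    (h₂ : R₂ ⋙ G₂ = H₂ ⋙ R₃) (h : R₁ ⋙ G = H ⋙ R₃) :
    (mateEquiv adj₁ adj₃).symm (eqToHom h) =
      eqToHom (by rw [hG]; rfl) ≫
        whiskerLeft G₁ ((mateEquiv adj₂ adj₃).symm (eqToHom h₂)) ≫
          whiskerRight ((mateEquiv adj₁ adj₂).symm (eqToHom h₁)) H₂ ≫
            eqToHom (by rw [hH]; rfl) := by
  subst hG hH
  have h_paste := mateEquiv_symm_vcomp adj₁ adj₂ adj₃ (eqToHom h₁) (eqToHom h₂)
  rw [eqToHom_vComp_eqToHom] at h_paste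
  rw [h_paste]
  ext; simp [hComp]; rfl

end CategoryTheory

section

variable {F G : S ⥤ Cat} (α : F ⟶ G) (β : ∀ s : S, (G.obj s : Type _) ⥤ (F.obj s : Type _))
  (adj : ∀ s : S, β s ⊣ ((α.app s).toFunctor : (F.obj s : Type _) ⥤ (G.obj s : Type _)))

theorem bcMate_id (s : S) :
    bcMate α β adj (𝟙 s) = eqToHom (by rw [F.map_id, G.map_id]; rfl) :=
  mateEquiv_symm_eqToHom_of_eq_id (adj s) (by rw [G.map_id]; rfl) (by rw [F.map_id]; rfl) _

theorem bcMate_comp {s s' s'' : S} (f : s ⟶ s') (g : s' ⟶ s'') :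
    bcMate α β adj (f ≫ g) =
      eqToHom (by rw [G.map_comp]; rfl) ≫
        Functor.whiskerLeft (G.map f).toFunctor (bcMate α β adj g) ≫
          Functor.whiskerRight (bcMate α β adj f) (F.map g).toFunctor ≫
            eqToHom (by rw [F.map_comp]; rfl) :=
  mateEquiv_symm_eqToHom_of_eq_comp (adj s) (adj s') (adj s'')
    (by rw [G.map_comp]; rfl) (by rw [F.map_comp]; rfl) _ _ _

end

/-- let `p` and `q` be the opfibrations classified by `F, G : S ⥤ Cat`, and
`α : F ⟶ G` a natural transformation whose components admit left adjoints `β s ⊣ α.app s`.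
If every naturality square of `α` is left adjointable (its Beck–Chevalley mate is an
isomorphism), then the `β s` assemble into a pseudonatural transformation `G ⟹ F`: for each
`f : s ⟶ s'` there is a natural isomorphism `G f ⋙ β s' ≅ β s ⋙ F f` (given by the mate),
compatible with identities and with composition of morphisms of `S`. -/
theorem left_adjointable_pointwise_adjoints_pseudonatural
    {F G : S ⥤ Cat} (α : F ⟶ G)
    (β : ∀ s : S, (G.obj s : Type _) ⥤ (F.obj s : Type _))
    (adj : ∀ s : S, β s ⊣ ((α.app s).toFunctor : (F.obj s : Type _) ⥤ (G.obj s : Type _)))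
    (hBC : ∀ {s s' : S} (f : s ⟶ s'), IsIso (bcMate α β adj f)) :
    ∃ iso : ∀ {s s' : S} (f : s ⟶ s'),
        ((G.map f).toFunctor : (G.obj s : Type _) ⥤ (G.obj s' : Type _)) ⋙ β s' ≅
          β s ⋙ ((F.map f).toFunctor : (F.obj s : Type _) ⥤ (F.obj s' : Type _)),
      (∀ {s s' : S} (f : s ⟶ s'), (iso f).hom = bcMate α β adj f) ∧
      (∀ s : S, (iso (𝟙 s)).hom =
        eqToHom (by rw [F.map_id, G.map_id]; rfl)) ∧
      (∀ {s s' s'' : S} (f : s ⟶ s') (g : s' ⟶ s''),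
        (iso (f ≫ g)).hom =
          eqToHom (by rw [G.map_comp]; rfl) ≫
            Functor.whiskerLeft ((G.map f).toFunctor : (G.obj s : Type _) ⥤ (G.obj s' : Type _)) (iso g).hom ≫
              Functor.whiskerRight (iso f).hom
                ((F.map g).toFunctor : (F.obj s' : Type _) ⥤ (F.obj s'' : Type _)) ≫
                eqToHom (by rw [F.map_comp]; rfl)) :=
  ⟨fun f => @asIso _ _ _ _ (bcMate α β adj f) (hBC f), fun _ => rfl,
    bcMate_id α β adj, bcMate_comp α β adj⟩
end

section
/- A bilax monoidal functor preserves bimonoids: if F : C → D is a bilax monoidal functor between duoidal categories (lax with respect to ⊗ and oplax with respect to ⋄, with compatibility axioms), and B is a bimonoid in C (a ⊗-monoid and ⋄-comonoid whose structures are compatible via the interchange), then F(B) is canonically a bimonoid in D. -/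
open CategoryTheory

/-- A duoidal (2-monoidal) structure relating two monoidal structures `M₁ = (⊗, I)` and
`M₂ = (⋄, J)` on the same category `C`: an interchange transformation
`ζ : (a ⋄ b) ⊗ (c ⋄ d) ⟶ (a ⊗ c) ⋄ (b ⊗ d)` and structure morphisms `Δ : I ⟶ I ⋄ I`,
`μ : J ⊗ J ⟶ J`, `ι : I ⟶ J` satisfying the duoidal axioms. -/
structure DuoidalStruct (C : Type*) [Category C] (M₁ M₂ : MonoidalCategory C) where
  ζ : ∀ a b c d : C,
    M₁.tensorObj (M₂.tensorObj a b) (M₂.tensorObj c d) ⟶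
      M₂.tensorObj (M₁.tensorObj a c) (M₁.tensorObj b d)
  Δ : M₁.tensorUnit ⟶ M₂.tensorObj M₁.tensorUnit M₁.tensorUnit
  μ : M₁.tensorObj M₂.tensorUnit M₂.tensorUnit ⟶ M₂.tensorUnit
  ι : M₁.tensorUnit ⟶ M₂.tensorUnit
  ζ_natural : ∀ {a a' b b' c c' d d' : C}
      (f : a ⟶ a') (g : b ⟶ b') (h : c ⟶ c') (k : d ⟶ d'),
    M₁.tensorHom (M₂.tensorHom f g) (M₂.tensorHom h k) ≫ ζ a' b' c' d' =
      ζ a b c d ≫ M₂.tensorHom (M₁.tensorHom f h) (M₁.tensorHom g k)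
  ζ_assoc₁ : ∀ a b c d e f : C,
    M₁.tensorHom (ζ a b c d) (𝟙 (M₂.tensorObj e f)) ≫
        ζ (M₁.tensorObj a c) (M₁.tensorObj b d) e f ≫
          M₂.tensorHom (M₁.associator a c e).hom (M₁.associator b d f).hom =
      (M₁.associator (M₂.tensorObj a b) (M₂.tensorObj c d) (M₂.tensorObj e f)).hom ≫
        M₁.tensorHom (𝟙 (M₂.tensorObj a b)) (ζ c d e f) ≫
          ζ a b (M₁.tensorObj c e) (M₁.tensorObj d f)
  ζ_assoc₂ : ∀ a b c d e f : C,
    ζ (M₂.tensorObj a b) c (M₂.tensorObj d e) f ≫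
        M₂.tensorHom (ζ a b d e) (𝟙 (M₁.tensorObj c f)) ≫
          (M₂.associator (M₁.tensorObj a d) (M₁.tensorObj b e) (M₁.tensorObj c f)).hom =
      M₁.tensorHom (M₂.associator a b c).hom (M₂.associator d e f).hom ≫
        ζ a (M₂.tensorObj b c) d (M₂.tensorObj e f) ≫
          M₂.tensorHom (𝟙 (M₁.tensorObj a d)) (ζ b c e f)
  ζ_unit_left : ∀ a b : C,
    M₁.tensorHom Δ (𝟙 (M₂.tensorObj a b)) ≫
        ζ M₁.tensorUnit M₁.tensorUnit a b ≫
          M₂.tensorHom (M₁.leftUnitor a).hom (M₁.leftUnitor b).hom =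
      (M₁.leftUnitor (M₂.tensorObj a b)).hom
  ζ_unit_right : ∀ a b : C,
    M₁.tensorHom (𝟙 (M₂.tensorObj a b)) Δ ≫
        ζ a b M₁.tensorUnit M₁.tensorUnit ≫
          M₂.tensorHom (M₁.rightUnitor a).hom (M₁.rightUnitor b).hom =
      (M₁.rightUnitor (M₂.tensorObj a b)).hom
  ζ_counit_left : ∀ a b : C,
    ζ M₂.tensorUnit a M₂.tensorUnit b ≫
        M₂.tensorHom μ (𝟙 (M₁.tensorObj a b)) ≫
          (M₂.leftUnitor (M₁.tensorObj a b)).hom =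
      M₁.tensorHom (M₂.leftUnitor a).hom (M₂.leftUnitor b).hom
  ζ_counit_right : ∀ a b : C,
    ζ a M₂.tensorUnit b M₂.tensorUnit ≫
        M₂.tensorHom (𝟙 (M₁.tensorObj a b)) μ ≫
          (M₂.rightUnitor (M₁.tensorObj a b)).hom =
      M₁.tensorHom (M₂.rightUnitor a).hom (M₂.rightUnitor b).hom
  μ_assoc : M₁.tensorHom μ (𝟙 M₂.tensorUnit) ≫ μ =
    (M₁.associator M₂.tensorUnit M₂.tensorUnit M₂.tensorUnit).hom ≫
      M₁.tensorHom (𝟙 M₂.tensorUnit) μ ≫ μ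
  μ_unit_left : M₁.tensorHom ι (𝟙 M₂.tensorUnit) ≫ μ = (M₁.leftUnitor M₂.tensorUnit).hom
  μ_unit_right : M₁.tensorHom (𝟙 M₂.tensorUnit) ι ≫ μ = (M₁.rightUnitor M₂.tensorUnit).hom
  Δ_coassoc : Δ ≫ M₂.tensorHom Δ (𝟙 M₁.tensorUnit) ≫
      (M₂.associator M₁.tensorUnit M₁.tensorUnit M₁.tensorUnit).hom =
    Δ ≫ M₂.tensorHom (𝟙 M₁.tensorUnit) Δ
  Δ_counit_left : Δ ≫ M₂.tensorHom ι (𝟙 M₁.tensorUnit) ≫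
      (M₂.leftUnitor M₁.tensorUnit).hom = 𝟙 M₁.tensorUnit
  Δ_counit_right : Δ ≫ M₂.tensorHom (𝟙 M₁.tensorUnit) ι ≫
      (M₂.rightUnitor M₁.tensorUnit).hom = 𝟙 M₁.tensorUnit

/-- A bimonoid in a duoidal category: an object with a `⊗`-monoid structure and a
`⋄`-comonoid structure, compatible via the interchange data. -/
structure Bimon {C : Type*} [Category C] {M₁ M₂ : MonoidalCategory C}
    (D : DuoidalStruct C M₁ M₂) (B : C) where
  mul : M₁.tensorObj B B ⟶ B
  one : M₁.tensorUnit ⟶ B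
  comul : B ⟶ M₂.tensorObj B B
  counit : B ⟶ M₂.tensorUnit
  mul_assoc : M₁.tensorHom mul (𝟙 B) ≫ mul =
    (M₁.associator B B B).hom ≫ M₁.tensorHom (𝟙 B) mul ≫ mul
  one_mul : M₁.tensorHom one (𝟙 B) ≫ mul = (M₁.leftUnitor B).hom
  mul_one : M₁.tensorHom (𝟙 B) one ≫ mul = (M₁.rightUnitor B).hom
  comul_coassoc : comul ≫ M₂.tensorHom comul (𝟙 B) ≫ (M₂.associator B B B).hom =
    comul ≫ M₂.tensorHom (𝟙 B) comul
  counit_comul : comul ≫ M₂.tensorHom counit (𝟙 B) ≫ (M₂.leftUnitor B).hom = 𝟙 B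
  comul_counit : comul ≫ M₂.tensorHom (𝟙 B) counit ≫ (M₂.rightUnitor B).hom = 𝟙 B
  compat_mul_comul : mul ≫ comul =
    M₁.tensorHom comul comul ≫ D.ζ B B B B ≫ M₂.tensorHom mul mul
  compat_mul_counit : mul ≫ counit = M₁.tensorHom counit counit ≫ D.μ
  compat_one_comul : one ≫ comul = D.Δ ≫ M₂.tensorHom one one
  compat_one_counit : one ≫ counit = D.ι

/-- A bilax monoidal functor between duoidal categories: lax with respect to the first
monoidal structures, oplax with respect to the second, with the bilax compatibility axioms. -/
structure BilaxFunctor {C : Type*} {D' : Type*} [Category C] [Category D']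
    {M₁ M₂ : MonoidalCategory C} {N₁ N₂ : MonoidalCategory D'}
    (DC : DuoidalStruct C M₁ M₂) (DD : DuoidalStruct D' N₁ N₂) where
  F : C ⥤ D'
  ε : N₁.tensorUnit ⟶ F.obj M₁.tensorUnit
  lax : ∀ a b : C, N₁.tensorObj (F.obj a) (F.obj b) ⟶ F.obj (M₁.tensorObj a b)
  η : F.obj M₂.tensorUnit ⟶ N₂.tensorUnit
  oplax : ∀ a b : C, F.obj (M₂.tensorObj a b) ⟶ N₂.tensorObj (F.obj a) (F.obj b)
  lax_natural : ∀ {a a' b b' : C} (f : a ⟶ a') (g : b ⟶ b'),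
    N₁.tensorHom (F.map f) (F.map g) ≫ lax a' b' = lax a b ≫ F.map (M₁.tensorHom f g)
  lax_assoc : ∀ a b c : C,
    N₁.tensorHom (lax a b) (𝟙 (F.obj c)) ≫ lax (M₁.tensorObj a b) c ≫
        F.map (M₁.associator a b c).hom =
      (N₁.associator (F.obj a) (F.obj b) (F.obj c)).hom ≫
        N₁.tensorHom (𝟙 (F.obj a)) (lax b c) ≫ lax a (M₁.tensorObj b c)
  lax_unit_left : ∀ a : C,
    N₁.tensorHom ε (𝟙 (F.obj a)) ≫ lax M₁.tensorUnit a ≫ F.map (M₁.leftUnitor a).hom =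
      (N₁.leftUnitor (F.obj a)).hom
  lax_unit_right : ∀ a : C,
    N₁.tensorHom (𝟙 (F.obj a)) ε ≫ lax a M₁.tensorUnit ≫ F.map (M₁.rightUnitor a).hom =
      (N₁.rightUnitor (F.obj a)).hom
  oplax_natural : ∀ {a a' b b' : C} (f : a ⟶ a') (g : b ⟶ b'),
    oplax a b ≫ N₂.tensorHom (F.map f) (F.map g) = F.map (M₂.tensorHom f g) ≫ oplax a' b'
  oplax_assoc : ∀ a b c : C,
    oplax (M₂.tensorObj a b) c ≫ N₂.tensorHom (oplax a b) (𝟙 (F.obj c)) ≫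
        (N₂.associator (F.obj a) (F.obj b) (F.obj c)).hom =
      F.map (M₂.associator a b c).hom ≫ oplax a (M₂.tensorObj b c) ≫
        N₂.tensorHom (𝟙 (F.obj a)) (oplax b c)
  oplax_unit_left : ∀ a : C,
    F.map (M₂.leftUnitor a).inv ≫ oplax M₂.tensorUnit a ≫ N₂.tensorHom η (𝟙 (F.obj a)) =
      (N₂.leftUnitor (F.obj a)).inv
  oplax_unit_right : ∀ a : C,
    F.map (M₂.rightUnitor a).inv ≫ oplax a M₂.tensorUnit ≫ N₂.tensorHom (𝟙 (F.obj a)) η =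
      (N₂.rightUnitor (F.obj a)).inv
  compat_braid : ∀ a b c d : C,
    N₁.tensorHom (oplax a b) (oplax c d) ≫
        DD.ζ (F.obj a) (F.obj b) (F.obj c) (F.obj d) ≫
          N₂.tensorHom (lax a c) (lax b d) =
      lax (M₂.tensorObj a b) (M₂.tensorObj c d) ≫ F.map (DC.ζ a b c d) ≫
        oplax (M₁.tensorObj a c) (M₁.tensorObj b d)
  compat_Δ : DD.Δ ≫ N₂.tensorHom ε ε =
    ε ≫ F.map DC.Δ ≫ oplax M₁.tensorUnit M₁.tensorUnit
  compat_μ : lax M₂.tensorUnit M₂.tensorUnit ≫ F.map DC.μ ≫ η =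
    N₁.tensorHom η η ≫ DD.μ
  compat_ι : ε ≫ F.map DC.ι ≫ η = DD.ι

/-- a bilax monoidal functor between duoidal categories preserves bimonoids:
if `B` is a bimonoid in `C`, then `F B` carries a canonical bimonoid structure in `D`, with
multiplication, unit, comultiplication and counit obtained from those of `B` via the lax and
oplax structure maps of `F`. -/
theorem bilax_preserves_bimonoids {C : Type*} {D' : Type*} [Category C] [Category D']
    {M₁ M₂ : MonoidalCategory C} {N₁ N₂ : MonoidalCategory D'}
    {DC : DuoidalStruct C M₁ M₂} {DD : DuoidalStruct D' N₁ N₂}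
    (Φ : BilaxFunctor DC DD) {B : C} (P : Bimon DC B) :
    ∃ Q : Bimon DD (Φ.F.obj B),
      Q.mul = Φ.lax B B ≫ Φ.F.map P.mul ∧
      Q.one = Φ.ε ≫ Φ.F.map P.one ∧
      Q.comul = Φ.F.map P.comul ≫ Φ.oplax B B ∧
      Q.counit = Φ.F.map P.counit ≫ Φ.η := by
  obtain ⟨F, ε, lax, η, oplax, lnat, lassoc, lul, lur, onat, oassoc, oul, our, cb, cΔ, cμ, cι⟩ := Φ
  refine ⟨{
    mul := lax B B ≫ F.map P.mul
    one := ε ≫ F.map P.one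
    comul := F.map P.comul ≫ oplax B B
    counit := F.map P.counit ≫ η
    mul_assoc := ?_
    one_mul := ?_
    mul_one := ?_
    comul_coassoc := ?_
    counit_comul := ?_
    comul_counit := ?_
    compat_mul_comul := ?_
    compat_mul_counit := ?_
    compat_one_comul := ?_
    compat_one_counit := ?_ }, rfl, rfl, rfl, rfl⟩
  · -- mul_assoc
    have lnat1 := lnat P.mul (𝟙 B); rw [F.map_id] at lnat1
    have lnat2 := lnat (𝟙 B) P.mul; rw [F.map_id] at lnat2
    have e1 : N₁.tensorHom (lax B B ≫ F.map P.mul) (𝟙 (F.obj B)) =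
        N₁.tensorHom (lax B B) (𝟙 (F.obj B)) ≫
          N₁.tensorHom (F.map P.mul) (𝟙 (F.obj B)) := by
      rw [N₁.tensorHom_comp_tensorHom, Category.comp_id]
    have e2 : N₁.tensorHom (𝟙 (F.obj B)) (lax B B ≫ F.map P.mul) =
        N₁.tensorHom (𝟙 (F.obj B)) (lax B B) ≫
          N₁.tensorHom (𝟙 (F.obj B)) (F.map P.mul) := by
      rw [N₁.tensorHom_comp_tensorHom, Category.comp_id]
    rw [e1, e2]
    slice_lhs 2 3 => rw [lnat1]
    slice_lhs 3 4 => rw [← F.map_comp]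
    rw [P.mul_assoc, F.map_comp, F.map_comp]
    slice_lhs 1 3 => rw [lassoc]
    slice_lhs 3 4 => rw [← lnat2]
    simp only [Category.assoc]
  · -- one_mul
    have lnat1 := lnat P.one (𝟙 B); rw [F.map_id] at lnat1
    have e1 : N₁.tensorHom (ε ≫ F.map P.one) (𝟙 (F.obj B)) =
        N₁.tensorHom ε (𝟙 (F.obj B)) ≫
          N₁.tensorHom (F.map P.one) (𝟙 (F.obj B)) := by
      rw [N₁.tensorHom_comp_tensorHom, Category.comp_id]
    rw [e1]
    slice_lhs 2 3 => rw [lnat1]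
    slice_lhs 3 4 => rw [← F.map_comp]
    rw [P.one_mul]
    simpa only [Category.assoc] using lul B
  · -- mul_one
    have lnat1 := lnat (𝟙 B) P.one; rw [F.map_id] at lnat1
    have e1 : N₁.tensorHom (𝟙 (F.obj B)) (ε ≫ F.map P.one) =
        N₁.tensorHom (𝟙 (F.obj B)) ε ≫
          N₁.tensorHom (𝟙 (F.obj B)) (F.map P.one) := by
      rw [N₁.tensorHom_comp_tensorHom, Category.comp_id]
    rw [e1]
    slice_lhs 2 3 => rw [lnat1]
    slice_lhs 3 4 => rw [← F.map_comp]
    rw [P.mul_one]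
    simpa only [Category.assoc] using lur B
  · -- comul_coassoc
    have onat1 := onat P.comul (𝟙 B); rw [F.map_id] at onat1
    have onat2 := onat (𝟙 B) P.comul; rw [F.map_id] at onat2
    have e1 : N₂.tensorHom (F.map P.comul ≫ oplax B B) (𝟙 (F.obj B)) =
        N₂.tensorHom (F.map P.comul) (𝟙 (F.obj B)) ≫
          N₂.tensorHom (oplax B B) (𝟙 (F.obj B)) := by
      rw [N₂.tensorHom_comp_tensorHom, Category.comp_id]
    have e2 : N₂.tensorHom (𝟙 (F.obj B)) (F.map P.comul ≫ oplax B B) =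
        N₂.tensorHom (𝟙 (F.obj B)) (F.map P.comul) ≫
          N₂.tensorHom (𝟙 (F.obj B)) (oplax B B) := by
      rw [N₂.tensorHom_comp_tensorHom, Category.comp_id]
    rw [e1, e2]
    slice_lhs 2 3 => rw [onat1]
    slice_lhs 3 5 => rw [oassoc]
    slice_lhs 1 3 => rw [← F.map_comp, ← F.map_comp]
    rw [show P.comul ≫ M₂.tensorHom P.comul (𝟙 B) ≫ (M₂.associator B B B).hom =
        P.comul ≫ M₂.tensorHom (𝟙 B) P.comul from P.comul_coassoc]
    rw [F.map_comp]
    slice_lhs 2 3 => rw [← onat2]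
    simp only [Category.assoc]
  · -- counit_comul
    have onat1 := onat P.counit (𝟙 B); rw [F.map_id] at onat1
    have e1 : N₂.tensorHom (F.map P.counit ≫ η) (𝟙 (F.obj B)) =
        N₂.tensorHom (F.map P.counit) (𝟙 (F.obj B)) ≫
          N₂.tensorHom η (𝟙 (F.obj B)) := by
      rw [N₂.tensorHom_comp_tensorHom, Category.comp_id]
    have h : oplax M₂.tensorUnit B ≫ N₂.tensorHom η (𝟙 (F.obj B)) =
        F.map (M₂.leftUnitor B).hom ≫ (N₂.leftUnitor (F.obj B)).inv := by
      rw [← oul B, ← F.map_comp_assoc, Iso.hom_inv_id, F.map_id, Category.id_comp]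
    rw [e1]
    slice_lhs 2 3 => rw [onat1]
    slice_lhs 3 4 => rw [h]
    slice_lhs 4 5 => rw [Iso.inv_hom_id]
    slice_lhs 2 3 => rw [← F.map_comp]
    slice_lhs 1 2 => rw [← F.map_comp]
    rw [Category.comp_id, show P.comul ≫ M₂.tensorHom P.counit (𝟙 B) ≫
        (M₂.leftUnitor B).hom = 𝟙 B from P.counit_comul]
    · exact F.map_id B
  · -- comul_counit
    have onat1 := onat (𝟙 B) P.counit; rw [F.map_id] at onat1
    have e1 : N₂.tensorHom (𝟙 (F.obj B)) (F.map P.counit ≫ η) =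
        N₂.tensorHom (𝟙 (F.obj B)) (F.map P.counit) ≫
          N₂.tensorHom (𝟙 (F.obj B)) η := by
      rw [N₂.tensorHom_comp_tensorHom, Category.comp_id]
    have h : oplax B M₂.tensorUnit ≫ N₂.tensorHom (𝟙 (F.obj B)) η =
        F.map (M₂.rightUnitor B).hom ≫ (N₂.rightUnitor (F.obj B)).inv := by
      rw [← our B, ← F.map_comp_assoc, Iso.hom_inv_id, F.map_id, Category.id_comp]
    rw [e1]
    slice_lhs 2 3 => rw [onat1]
    slice_lhs 3 4 => rw [h]
    slice_lhs 4 5 => rw [Iso.inv_hom_id]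
    slice_lhs 2 3 => rw [← F.map_comp]
    slice_lhs 1 2 => rw [← F.map_comp]
    rw [Category.comp_id, show P.comul ≫ M₂.tensorHom (𝟙 B) P.counit ≫
        (M₂.rightUnitor B).hom = 𝟙 B from P.comul_counit]
    · exact F.map_id B
  · -- compat_mul_comul
    have e1 : N₁.tensorHom (F.map P.comul ≫ oplax B B) (F.map P.comul ≫ oplax B B) =
        N₁.tensorHom (F.map P.comul) (F.map P.comul) ≫
          N₁.tensorHom (oplax B B) (oplax B B) := (N₁.tensorHom_comp_tensorHom _ _ _ _).symm
    have e2 : N₂.tensorHom (lax B B ≫ F.map P.mul) (lax B B ≫ F.map P.mul) =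
        N₂.tensorHom (lax B B) (lax B B) ≫
          N₂.tensorHom (F.map P.mul) (F.map P.mul) := (N₂.tensorHom_comp_tensorHom _ _ _ _).symm
    rw [e1, e2]
    slice_rhs 2 4 => rw [cb]
    slice_rhs 1 2 => rw [lnat]
    slice_rhs 4 5 => rw [onat]
    slice_rhs 2 4 => rw [← F.map_comp, ← F.map_comp]
    rw [show M₁.tensorHom P.comul P.comul ≫ DC.ζ B B B B ≫
        M₂.tensorHom P.mul P.mul = P.mul ≫ P.comul from P.compat_mul_comul.symm]
    rw [F.map_comp]
    simp only [Category.assoc]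
  · -- compat_mul_counit
    have e1 : N₁.tensorHom (F.map P.counit ≫ η) (F.map P.counit ≫ η) =
        N₁.tensorHom (F.map P.counit) (F.map P.counit) ≫
          N₁.tensorHom η η := (N₁.tensorHom_comp_tensorHom _ _ _ _).symm
    rw [e1]
    slice_rhs 2 3 => rw [← cμ]
    slice_rhs 1 2 => rw [lnat]
    slice_rhs 2 3 => rw [← F.map_comp]
    rw [show M₁.tensorHom P.counit P.counit ≫ DC.μ = P.mul ≫ P.counit from
      P.compat_mul_counit.symm]
    rw [F.map_comp]
    simp only [Category.assoc]
  · -- compat_one_comul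
    have e1 : N₂.tensorHom (ε ≫ F.map P.one) (ε ≫ F.map P.one) =
        N₂.tensorHom ε ε ≫
          N₂.tensorHom (F.map P.one) (F.map P.one) := (N₂.tensorHom_comp_tensorHom _ _ _ _).symm
    rw [e1]
    slice_rhs 1 2 => rw [cΔ]
    slice_rhs 3 4 => rw [onat]
    slice_rhs 2 3 => rw [← F.map_comp]
    rw [show DC.Δ ≫ M₂.tensorHom P.one P.one = P.one ≫ P.comul from
      P.compat_one_comul.symm]
    rw [F.map_comp]
    simp only [Category.assoc]
  · -- compat_one_counit
    slice_lhs 2 3 => rw [← F.map_comp]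
    rw [show P.one ≫ P.counit = DC.ι from P.compat_one_counit]
    simpa only [Category.assoc] using cι
end

section
/- An equivalence of categories over the base between opfibrations automatically preserves opcartesian morphisms: if p : X → S and q : Y → S are Grothendieck opfibrations and f : X → Y is a functor over S that is an equivalence of categories, then f sends p-opcartesian morphisms to q-opcartesian morphisms (and hence is an equivalence in the category of opfibrations over S). -/
/-!
A fully faithful functor over `S` identifies the lifting problems for `φ` against `x''` with
those for `f φ` against `f x''`, and lifting problems against isomorphic targets correspond by
composing with the isomorphism. Since every object of `Y` is isomorphic to some `f x''`, every
lifting problem for `f φ` is thereby reduced to one for `φ`.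
-/

open CategoryTheory

variable {X Y S : Type*} [Category X] [Category Y] [Category S]

/-- `φ` is `p`-opcartesian. -/
def IsOpcart (p : X ⥤ S) {x x' : X} (φ : x ⟶ x') : Prop :=
  ∀ (x'' : X) (ψ : x ⟶ x'') (v : p.obj x' ⟶ p.obj x''),
    p.map ψ = p.map φ ≫ v → ∃! χ : x' ⟶ x'', p.map χ = v ∧ φ ≫ χ = ψ

/-- `p` is a Grothendieck opfibration. -/
def IsOpFib {X S : Type*} [Category X] [Category S] (p : X ⥤ S) : Prop :=
  ∀ (x : X) {s' : S} (u : p.obj x ⟶ s'),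
    ∃ (x' : X) (φ : x ⟶ x') (h : p.obj x' = s'),
      IsOpcart p φ ∧ p.map φ ≫ eqToHom h = u

/-- `IsOpcart p φ` is definitionally `∀ x'', IsOpcartAt p φ x''`. -/
def IsOpcartAt (p : X ⥤ S) {x x' : X} (φ : x ⟶ x') (x'' : X) : Prop :=
  ∀ (ψ : x ⟶ x'') (v : p.obj x' ⟶ p.obj x''),
    p.map ψ = p.map φ ≫ v → ∃! χ : x' ⟶ x'', p.map χ = v ∧ φ ≫ χ = ψ

theorem IsOpcartAt.of_iso {q : Y ⥤ S} {y y' y₁ y₂ : Y} {φ : y ⟶ y'}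
    (h : IsOpcartAt q φ y₁) (e : y₁ ≅ y₂) : IsOpcartAt q φ y₂ := by
  intro ψ v hv
  have transport : ∀ χ : y' ⟶ y₁, (q.map χ = v ≫ q.map e.inv ∧ φ ≫ χ = ψ ≫ e.inv) ↔
      (q.map (χ ≫ e.hom) = v ∧ φ ≫ χ ≫ e.hom = ψ) := by
    intro χ
    rw [← Functor.mapIso_inv, Iso.eq_comp_inv, Iso.eq_comp_inv, Functor.mapIso_hom,
      Functor.map_comp, Category.assoc]
  exact (e.homToEquiv.existsUnique_congr transport).mp
    (h _ _ (by rw [Functor.map_comp, hv, Category.assoc]))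

theorem isOpcartAt_comp_iff (f : X ⥤ Y) [f.Full] [f.Faithful] (q : Y ⥤ S) {x x' : X}
    (φ : x ⟶ x') (x'' : X) : IsOpcartAt (f ⋙ q) φ x'' ↔ IsOpcartAt q (f.map φ) (f.obj x'') := by
  have hff : f.FullyFaithful := .ofFullyFaithful f
  refine hff.homEquiv.forall_congr fun ψ => forall_congr' fun v => imp_congr Iff.rfl ?_
  refine hff.homEquiv.existsUnique_congr fun χ => and_congr Iff.rfl ?_
  simp only [Functor.FullyFaithful.homEquiv_apply, ← Functor.map_comp]
  exact f.map_injective.eq_iff.symm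

theorem equivalence_over_base_preserves_opcartesian_general
    (p : X ⥤ S) (q : Y ⥤ S)
    (f : X ⥤ Y) (hf : f ⋙ q = p) (hequiv : f.IsEquivalence) :
    ∀ {x x' : X} (φ : x ⟶ x'), IsOpcart p φ → IsOpcart q (f.map φ) := by
  subst hf
  intro x x' φ hφ y''
  have hfφ : IsOpcartAt q (f.map φ) (f.obj (f.objPreimage y'')) :=
    (isOpcartAt_comp_iff f q φ _).mp (hφ _)
  exact hfφ.of_iso (f.objObjPreimageIso y'')

/-- an equivalence of categories over the base between Grothendieck
opfibrations automatically preserves opcartesian morphisms. -/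
theorem equivalence_over_base_preserves_opcartesian
    (p : X ⥤ S) (q : Y ⥤ S) (hp : IsOpFib p) (hq : IsOpFib q)
    (f : X ⥤ Y) (hf : f ⋙ q = p) (hequiv : f.IsEquivalence) :
    ∀ {x x' : X} (φ : x ⟶ x'), IsOpcart p φ → IsOpcart q (f.map φ) :=
  equivalence_over_base_preserves_opcartesian_general p q f hf hequiv
end
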